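/- arXiv:1501.05806 — 3 statements merged into one kernel-verified Lean document; each statement's English description precedes it below -/
import Mathlib

section
/- Let n ≥ 2 and let S be a subset of M_n(ℂ) whose generated unital subalgebra is all of M_n(ℂ). If l(S) = 2n − 2 and L_2^0(S) contains an invertible matrix A that is derogatory (the degree of the minimal polynomial of A is at most n − 1), then l(S) = l_0(S). -/
/-
An invertible `A` has minimal polynomial `p` with `p(0) ≠ 0`, so `1` is a linear combination of
`A, A², …, A^d` with `d = deg p ≤ n - 1`. As `A ∈ L_2^0(S)`, `A^j ∈ L_{2j}^0(S)`, hence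
`1 ∈ L_{2n-2}^0(S)` and `L_{2n-2}^0(S) = L_{2n-2}(S) = M_n(ℂ)`. So `l_0(S) ≤ 2n - 2 = l(S)`, and
`l(S) ≤ l_0(S)` holds since `L_k^0(S) ≤ L_k(S)`.
-/

/-- `L_k(S)`: the ℂ-linear span of all words in `S` of length at most `k`
(including the empty word, the identity matrix). -/
noncomputable def wordSpan (n k : ℕ) (S : Set (Matrix (Fin n) (Fin n) ℂ)) :
    Submodule ℂ (Matrix (Fin n) (Fin n) ℂ) :=
  Submodule.span ℂ {M | ∃ w : List (Matrix (Fin n) (Fin n) ℂ),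
    w.length ≤ k ∧ (∀ x ∈ w, x ∈ S) ∧ M = w.prod}

/-- `L_k^0(S)`: the ℂ-linear span of all words in `S` of length between `1` and `k`. -/
noncomputable def wordSpan0 (n k : ℕ) (S : Set (Matrix (Fin n) (Fin n) ℂ)) :
    Submodule ℂ (Matrix (Fin n) (Fin n) ℂ) :=
  Submodule.span ℂ {M | ∃ w : List (Matrix (Fin n) (Fin n) ℂ),
    1 ≤ w.length ∧ w.length ≤ k ∧ (∀ x ∈ w, x ∈ S) ∧ M = w.prod}

open Polynomial

theorem minpoly.coeff_zero_ne_zero_of_isUnit {K A : Type*} [Field K] [Ring A] [Algebra K A]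
    [Nontrivial A] {x : A} (hx : IsIntegral K x) (hu : IsUnit x) :
    (minpoly K x).coeff 0 ≠ 0 := by
  intro h0
  set p := minpoly K x with hp_def
  have hp : X * p.divX = p := by simpa [h0] using X_mul_divX_add p
  have hq : Polynomial.aeval x p.divX = 0 := by
    have := minpoly.aeval K x
    rwa [← hp_def, ← hp, map_mul, aeval_X, hu.mul_right_eq_zero] at this
  have hq0 : p.divX ≠ 0 := fun h => minpoly.ne_zero hx (by rw [← hp_def, ← hp, h, mul_zero])
  exact (minpoly.degree_le_of_ne_zero K x hq0 hq).not_gt (degree_divX_lt (minpoly.ne_zero hx))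

theorem one_mem_span_pow_of_isUnit {K A : Type*} [Field K] [Ring A] [Algebra K A]
    [Nontrivial A] {x : A} (hx : IsIntegral K x) (hu : IsUnit x) :
    (1 : A) ∈ Submodule.span K ((x ^ ·) '' Set.Icc 1 (minpoly K x).natDegree) := by
  set p := minpoly K x with hp_def
  have hd : 0 < p.natDegree := minpoly.natDegree_pos hx
  have hsplit : x * aeval x p.divX + p.coeff 0 • 1 = 0 := by
    have h := congrArg (aeval x) (X_mul_divX_add p)
    rwa [map_add, map_mul, aeval_X, aeval_C, hp_def, minpoly.aeval, ← mul_one (algebraMap K A _),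
      ← Algebra.smul_def] at h
  have hone : (1 : A) = -(p.coeff 0)⁻¹ • (x * aeval x p.divX) := by
    rw [eq_neg_of_add_eq_zero_left hsplit, neg_smul_neg, smul_smul,
      inv_mul_cancel₀ (minpoly.coeff_zero_ne_zero_of_isUnit hx hu), one_smul]
  have hdeg : p.divX.natDegree < p.natDegree := by
    rw [natDegree_divX_eq_natDegree_tsub_one]; omega
  rw [hone, aeval_eq_sum_range' hdeg, Finset.mul_sum]
  refine Submodule.smul_mem _ _ (Submodule.sum_mem _ fun i hi => ?_)
  rw [mul_smul_comm, ← pow_succ']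
  exact Submodule.smul_mem _ _
    (Submodule.subset_span ⟨i + 1, ⟨by omega, Finset.mem_range.mp hi⟩, rfl⟩)

section WordSpan

variable {n : ℕ} {S : Set (Matrix (Fin n) (Fin n) ℂ)}

lemma wordSpan0_mono {k m : ℕ} (h : k ≤ m) : wordSpan0 n k S ≤ wordSpan0 n m S := by
  apply Submodule.span_mono
  rintro M ⟨w, h1, h2, h3, h4⟩
  exact ⟨w, h1, h2.trans h, h3, h4⟩

lemma wordSpan0_le_wordSpan (k : ℕ) : wordSpan0 n k S ≤ wordSpan n k S := by
  apply Submodule.span_mono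
  rintro M ⟨w, -, h2, h3, h4⟩
  exact ⟨w, h2, h3, h4⟩

lemma wordSpan0_eq_wordSpan_of_one_mem {k : ℕ} (h1 : 1 ∈ wordSpan0 n k S) :
    wordSpan0 n k S = wordSpan n k S := by
  refine le_antisymm (wordSpan0_le_wordSpan k) (Submodule.span_le.mpr ?_)
  rintro M ⟨w, hw, hwS, rfl⟩
  obtain rfl | hne := eq_or_ne w []
  · exact h1
  · exact Submodule.subset_span ⟨w, List.length_pos_iff.mpr hne, hw, hwS, rfl⟩

lemma mul_mem_wordSpan0 {k m : ℕ} {a b : Matrix (Fin n) (Fin n) ℂ}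
    (ha : a ∈ wordSpan0 n k S) (hb : b ∈ wordSpan0 n m S) :
    a * b ∈ wordSpan0 n (k + m) S := by
  have h := Submodule.mul_mem_mul ha hb
  rw [wordSpan0, wordSpan0, Submodule.span_mul_span] at h
  refine Submodule.span_le.mpr ?_ h
  rintro _ ⟨_, ⟨u, hu1, hu2, huS, rfl⟩, _, ⟨v, -, hv2, hvS, rfl⟩, rfl⟩
  refine Submodule.subset_span ⟨u ++ v, ?_, ?_, ?_, List.prod_append.symm⟩
  · rw [List.length_append]; omega
  · rw [List.length_append]; omega
  · simpa only [List.mem_append] using fun x hx => hx.elim (huS x) (hvS x)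

lemma pow_mem_wordSpan0 {k : ℕ} {A : Matrix (Fin n) (Fin n) ℂ} (hA : A ∈ wordSpan0 n k S)
    {j : ℕ} (hj : 1 ≤ j) : A ^ j ∈ wordSpan0 n (k * j) S := by
  induction j, hj using Nat.le_induction with
  | base => simpa using hA
  | succ j _ ih => simpa only [pow_succ, Nat.mul_succ] using mul_mem_wordSpan0 ih hA

lemma one_mem_wordSpan0_of_isUnit {k : ℕ} {A : Matrix (Fin n) (Fin n) ℂ} [NeZero n]
    (hA : A ∈ wordSpan0 n k S) (hu : IsUnit A) :
    1 ∈ wordSpan0 n (k * (minpoly ℂ A).natDegree) S := by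
  refine Submodule.span_le.mpr ?_ (one_mem_span_pow_of_isUnit (Algebra.IsIntegral.isIntegral A) hu)
  rintro _ ⟨j, hj, rfl⟩
  exact wordSpan0_mono (Nat.mul_le_mul_left k hj.2) (pow_mem_wordSpan0 hA hj.1)

lemma wordSpan_eq_top_of_wordSpan0_eq_top {k : ℕ} (h : wordSpan0 n k S = ⊤) :
    wordSpan n k S = ⊤ :=
  top_unique (h ▸ wordSpan0_le_wordSpan k)

end WordSpan

theorem stmt_2_general (n : ℕ) (hn : 2 ≤ n) (S : Set (Matrix (Fin n) (Fin n) ℂ))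
    (hlen : sInf {k | wordSpan n k S = ⊤} = 2 * n - 2)
    (hinv : ∃ A ∈ wordSpan0 n 2 S, IsUnit A ∧ (minpoly ℂ A).natDegree ≤ n - 1) :
    sInf {k | wordSpan n k S = ⊤} = sInf {k | wordSpan0 n k S = ⊤} := by
  obtain ⟨A, hA, hu, hdeg⟩ := hinv
  have : NeZero n := ⟨by omega⟩
  have hne : {k | wordSpan n k S = ⊤}.Nonempty := Nat.nonempty_of_pos_sInf (by omega)
  have htop : wordSpan n (2 * n - 2) S = ⊤ := hlen ▸ Nat.sInf_mem hne
  have hone : 1 ∈ wordSpan0 n (2 * n - 2) S :=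
    wordSpan0_mono (by omega) (one_mem_wordSpan0_of_isUnit hA hu)
  have htop0 : wordSpan0 n (2 * n - 2) S = ⊤ := (wordSpan0_eq_wordSpan_of_one_mem hone).trans htop
  have hne0 : {k | wordSpan0 n k S = ⊤}.Nonempty := ⟨_, htop0⟩
  exact le_antisymm (Nat.sInf_le (wordSpan_eq_top_of_wordSpan0_eq_top (Nat.sInf_mem hne0)))
    (hlen ▸ Nat.sInf_le htop0)

/-- If `S` generates `M_n(ℂ)`, `l(S) = 2n - 2` and `L_2^0(S)` contains an invertible
derogatory matrix, then `l(S) = l_0(S)`. -/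
theorem stmt_2 (n : ℕ) (hn : 2 ≤ n) (S : Set (Matrix (Fin n) (Fin n) ℂ))
    (hgen : Algebra.adjoin ℂ S = ⊤)
    (hlen : sInf {k | wordSpan n k S = ⊤} = 2 * n - 2)
    (hinv : ∃ A ∈ wordSpan0 n 2 S, IsUnit A ∧ (minpoly ℂ A).natDegree ≤ n - 1) :
    sInf {k | wordSpan n k S = ⊤} = sInf {k | wordSpan0 n k S = ⊤} :=
  stmt_2_general n hn S hlen hinv
end

section
/- Let n ≥ 3, let J_n ∈ M_n(ℂ) be the nilpotent Jordan block, and let B_n = E_{n−1,1} − E_{n,2} ∈ M_n(ℂ). Then the ℂ-linear span of all products of at most 2n − 3 elements of {J_n, B_n} (including the empty product, the identity matrix) is all of M_n(ℂ), and the ℂ-linear span of all products of at most 2n − 4 such elements (including the empty product) is a proper subspace of M_n(ℂ). That is, l({J_n, B_n}) = 2n − 3. -/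
/-!
Indices are 0-based, so `B = E_{n-2,0} - E_{n-1,1}`.

Spanning: `B J^{n-3} B = -E_{n-1,0}`, so `J^{n-1-i} B J^{n-3} B J^j = -E_{ij}` is a word of length
`2n - 2 - i + j ≤ 2n - 3` whenever `j < i`. The words `J^{n-2-i} B J^j = E_{ij} - E_{i+1,j+1}`
telescope along each diagonal, so the upper triangle follows from the first row:
`J^{n-1} B J^{d-1} = -E_{0d}`, `J^{n-1} = E_{0,n-1}`, and `E_{00} = (1 + ∑_k (E_{00} - E_{kk})) / n`
(no other word of length `≤ 2n - 3` has nonzero trace, so this division by `n` is needed).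

Properness: grade `M_n` by `j - i`. Then `J` has degree `1` and `B` degree `2 - n`, so a word of
length `L` with `k` letters `B` is homogeneous of degree `L - (n - 1) k`. The functional
`M ↦ tr (J M)` (the sum of the subdiagonal entries) only sees degree `-1`; for `L ≤ 2n - 4` this
forces `k = 1`, i.e. the word is `J^a B J^b` with `a + b = n - 3`, and then
`tr (J^{a+1} B J^b) = tr (J^{n-2} B) = 0`. But `tr (J E_{10}) = 1`.
-/

/-- The `n × n` nilpotent Jordan block over `ℂ`. -/
def jordan (n : ℕ) : Matrix (Fin n) (Fin n) ℂ :=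
  Matrix.of fun a b => if (a : ℕ) + 1 = (b : ℕ) then 1 else 0

open Matrix

section DiagDegree

variable {R : Type*} {n : ℕ}

def HasDiagDegree [Zero R] (M : Matrix (Fin n) (Fin n) R) (d : ℤ) : Prop :=
  ∀ i j, M i j ≠ 0 → (j : ℤ) - i = d

theorem hasDiagDegree_one [Zero R] [One R] :
    HasDiagDegree (1 : Matrix (Fin n) (Fin n) R) 0 := by
  intro i j h
  obtain rfl : i = j := by_contra fun hij => h (one_apply_ne hij)
  simp

theorem HasDiagDegree.mul [NonUnitalNonAssocSemiring R] {M N : Matrix (Fin n) (Fin n) R}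
    {d e : ℤ} (hM : HasDiagDegree M d) (hN : HasDiagDegree N e) :
    HasDiagDegree (M * N) (d + e) := by
  intro i j h
  rw [mul_apply] at h
  obtain ⟨k, -, hk⟩ := Finset.exists_ne_zero_of_sum_ne_zero h
  have := hM i k (left_ne_zero_of_mul hk)
  have := hN k j (right_ne_zero_of_mul hk)
  omega

theorem HasDiagDegree.trace_eq_zero [AddCommMonoid R] {M : Matrix (Fin n) (Fin n) R} {d : ℤ}
    (hM : HasDiagDegree M d) (hd : d ≠ 0) : M.trace = 0 :=
  Finset.sum_eq_zero fun i _ => by_contra fun h => hd (by simpa using (hM i i h).symm)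

/-- `k` counts the letters `B` of the word `w`. -/
theorem exists_hasDiagDegree_list_prod [Semiring R] {J B : Matrix (Fin n) (Fin n) R} {e : ℤ}
    (hJ : HasDiagDegree J 1) (hB : HasDiagDegree B e) (w : List (Matrix (Fin n) (Fin n) R))
    (hw : ∀ x ∈ w, x ∈ ({J, B} : Set (Matrix (Fin n) (Fin n) R))) :
    ∃ k : ℕ, HasDiagDegree w.prod (w.length + (e - 1) * k) ∧
      (k = 0 → w.prod = J ^ w.length) ∧
      (k = 1 → ∃ a b, a + 1 + b = w.length ∧ w.prod = J ^ a * B * J ^ b) := by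
  induction w with
  | nil => exact ⟨0, by simpa using hasDiagDegree_one, by simp, by simp⟩
  | cons x w ih =>
    obtain ⟨k, hdeg, h0, h1⟩ := ih fun y hy => hw y (List.mem_cons_of_mem _ hy)
    rcases hw x List.mem_cons_self with rfl | rfl
    · refine ⟨k, ?_, fun hk => ?_, fun hk => ?_⟩
      · rw [List.prod_cons]
        convert hJ.mul hdeg using 1
        push_cast [List.length_cons]; ring
      · rw [List.prod_cons, h0 hk, List.length_cons, pow_succ']
      · obtain ⟨a, b, hab, hprod⟩ := h1 hk
        refine ⟨a + 1, b, by rw [List.length_cons]; omega, ?_⟩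
        rw [List.prod_cons, hprod, pow_succ', mul_assoc, mul_assoc, mul_assoc]
    · refine ⟨k + 1, ?_, fun hk => absurd hk k.succ_ne_zero, fun hk => ?_⟩
      · rw [List.prod_cons]
        convert hB.mul hdeg using 1
        push_cast [List.length_cons]; ring
      · obtain rfl : k = 0 := by omega
        refine ⟨0, w.length, by rw [List.length_cons]; omega, ?_⟩
        rw [List.prod_cons, h0 rfl, pow_zero, one_mul]

end DiagDegree

section wordSpan

variable {n k l : ℕ} {S : Set (Matrix (Fin n) (Fin n) ℂ)} {x M N : Matrix (Fin n) (Fin n) ℂ}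

theorem wordSpan_mono (h : k ≤ l) : wordSpan n k S ≤ wordSpan n l S :=
  Submodule.span_mono fun _ ⟨w, hw, hwS, hM⟩ => ⟨w, hw.trans h, hwS, hM⟩

theorem one_mem_wordSpan : 1 ∈ wordSpan n 0 S :=
  Submodule.subset_span ⟨[], le_rfl, by simp, rfl⟩

theorem mem_wordSpan_one (hx : x ∈ S) : x ∈ wordSpan n 1 S :=
  Submodule.subset_span ⟨[x], le_rfl, by simpa using hx, by simp⟩

theorem mul_mem_wordSpan (hM : M ∈ wordSpan n k S) (hN : N ∈ wordSpan n l S) :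
    M * N ∈ wordSpan n (k + l) S := by
  have hMN := Submodule.mul_mem_mul hM hN
  rw [wordSpan, wordSpan, Submodule.span_mul_span] at hMN
  refine Submodule.span_mono ?_ hMN
  rintro _ ⟨_, ⟨v, hv, hvS, rfl⟩, _, ⟨w, hw, hwS, rfl⟩, rfl⟩
  refine ⟨v ++ w, by rw [List.length_append]; omega, fun y hy => ?_, by simp⟩
  rcases List.mem_append.1 hy with hy | hy
  exacts [hvS y hy, hwS y hy]

theorem pow_mem_wordSpan (hx : x ∈ S) (m : ℕ) : x ^ m ∈ wordSpan n m S := by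
  induction m with
  | zero => exact one_mem_wordSpan
  | succ m ih => exact pow_succ x m ▸ mul_mem_wordSpan ih (mem_wordSpan_one hx)

theorem pow_mul_mul_pow_mem_wordSpan (hx : x ∈ S) (hM : M ∈ wordSpan n k S) (a b : ℕ) :
    x ^ a * M * x ^ b ∈ wordSpan n (a + k + b) S :=
  mul_mem_wordSpan (mul_mem_wordSpan (pow_mem_wordSpan hx a) hM) (pow_mem_wordSpan hx b)

end wordSpan

section jordan

variable {n : ℕ}

theorem jordan_pow_apply (m : ℕ) (i j : Fin n) :
    (jordan n ^ m) i j = if (i : ℕ) + m = j then 1 else 0 := by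
  induction m generalizing j with
  | zero => simp [one_apply, Fin.ext_iff]
  | succ m ih =>
    rw [pow_succ, mul_apply]
    simp only [ih]
    simp only [jordan, of_apply, ite_mul, one_mul, zero_mul]
    rw [Fin.sum_univ_eq_sum_range
      (fun k => if (i : ℕ) + m = k then if k + 1 = (j : ℕ) then (1 : ℂ) else 0 else 0),
      Finset.sum_ite_eq]
    simp only [Finset.mem_range]
    have := j.isLt
    split_ifs <;> first | rfl | omega

theorem jordan_pow_mul_single {a : ℕ} {i p : Fin n} (h : (i : ℕ) + a = p) (q : Fin n) (c : ℂ) :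
    jordan n ^ a * single p q c = single i q c := by
  ext x y
  by_cases hy : y = q
  · subst hy
    rw [mul_single_apply_same, jordan_pow_apply, single_apply, ite_mul, one_mul, zero_mul]
    simp only [Fin.ext_iff, and_true]
    exact if_congr (by omega) rfl rfl
  · rw [mul_single_apply_of_ne (hbj := hy), single_apply_of_col_ne _ _ (Ne.symm hy)]

theorem single_mul_jordan_pow {b : ℕ} {q j : Fin n} (h : (q : ℕ) + b = j) (p : Fin n) (c : ℂ) :
    single p q c * jordan n ^ b = single p j c := by
  ext x y
  by_cases hx : x = p
  · subst hx
    rw [single_mul_apply_same, jordan_pow_apply, single_apply, mul_ite, mul_one, mul_zero]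
    simp only [Fin.ext_iff, true_and]
    exact if_congr (by omega) rfl rfl
  · rw [single_mul_apply_of_ne (h := hx), single_apply_of_row_ne (Ne.symm hx)]

theorem jordan_pow_sub_one (h : 0 < n) :
    jordan n ^ (n - 1) = single ⟨0, h⟩ ⟨n - 1, by omega⟩ 1 := by
  ext i j
  rw [jordan_pow_apply, single_apply]
  simp only [Fin.ext_iff]
  exact if_congr (by omega) rfl rfl

theorem hasDiagDegree_jordan : HasDiagDegree (jordan n) 1 := by
  intro i j h
  have : (i : ℕ) + 1 = j := by_contra fun hij => h (if_neg hij)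
  omega

end jordan

section matB

def matB (n : ℕ) (hn : 2 < n) : Matrix (Fin n) (Fin n) ℂ :=
  single ⟨n - 2, by omega⟩ ⟨0, by omega⟩ 1 - single ⟨n - 1, by omega⟩ ⟨1, by omega⟩ 1

variable {n : ℕ} (hn : 2 < n)

theorem jordan_pow_mul_matB_mul_jordan_pow (i j : ℕ) (hi : i + 1 < n) (hj : j + 1 < n) :
    jordan n ^ (n - 2 - i) * matB n hn * jordan n ^ j =
      single ⟨i, by omega⟩ ⟨j, by omega⟩ 1 - single ⟨i + 1, hi⟩ ⟨j + 1, hj⟩ 1 := by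
  rw [matB, mul_sub, sub_mul,
    jordan_pow_mul_single (i := ⟨i, by omega⟩) (by dsimp only; omega),
    jordan_pow_mul_single (i := ⟨i + 1, hi⟩) (by dsimp only; omega),
    single_mul_jordan_pow (j := ⟨j, by omega⟩) (by simp),
    single_mul_jordan_pow (j := ⟨j + 1, hj⟩) (by dsimp only; omega)]

theorem jordan_pow_sub_one_mul_matB_mul_jordan_pow (j : ℕ) (hj : j + 1 < n) :
    jordan n ^ (n - 1) * matB n hn * jordan n ^ j = -single ⟨0, by omega⟩ ⟨j + 1, hj⟩ 1 := by
  rw [jordan_pow_sub_one (by omega), matB, mul_sub,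
    single_mul_single_of_ne (h := by simp only [ne_eq, Fin.mk.injEq]; omega),
    single_mul_single_same, zero_sub, neg_mul, mul_one,
    single_mul_jordan_pow (j := ⟨j + 1, hj⟩) (by dsimp only; omega)]

theorem matB_mul_jordan_pow_mul_matB :
    matB n hn * jordan n ^ (n - 3) * matB n hn = -single ⟨n - 1, by omega⟩ ⟨0, by omega⟩ 1 := by
  rw [matB, sub_mul, single_mul_jordan_pow (j := ⟨n - 3, by omega⟩) (by simp),
    single_mul_jordan_pow (j := ⟨n - 2, by omega⟩) (by dsimp only; omega),
    sub_mul, mul_sub, mul_sub,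
    single_mul_single_of_ne (h := by simp only [ne_eq, Fin.mk.injEq]; omega),
    single_mul_single_of_ne (h := by simp only [ne_eq, Fin.mk.injEq]; omega),
    single_mul_single_same,
    single_mul_single_of_ne (h := by simp only [ne_eq, Fin.mk.injEq]; omega),
    sub_self, sub_zero, zero_sub, mul_one]

theorem hasDiagDegree_matB : HasDiagDegree (matB n hn) (2 - n) := by
  intro i j h
  by_contra hij
  refine h ?_
  rw [matB, Matrix.sub_apply, single_apply_of_ne, single_apply_of_ne, sub_zero] <;>
    simp only [Fin.ext_iff] <;> omega

theorem trace_jordan_pow_mul_matB : (jordan n ^ (n - 2) * matB n hn).trace = 0 := by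
  rw [matB, mul_sub, trace_sub, trace_mul_single, trace_mul_single, jordan_pow_apply,
    jordan_pow_apply, if_pos (by simp), if_pos (by dsimp only; omega), sub_self]

theorem jordan_mem_pair : jordan n ∈ ({jordan n, matB n hn} : Set (Matrix (Fin n) (Fin n) ℂ)) :=
  Set.mem_insert _ _

theorem matB_mem_pair : matB n hn ∈ ({jordan n, matB n hn} : Set (Matrix (Fin n) (Fin n) ℂ)) :=
  Set.mem_insert_of_mem _ rfl

end matB

section spanning

variable {n : ℕ} (hn : 2 < n)

theorem jordan_pow_mul_matB_mul_jordan_pow_mem_wordSpan {a b : ℕ} (h : a + 1 + b ≤ 2 * n - 3) :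
    jordan n ^ a * matB n hn * jordan n ^ b ∈ wordSpan n (2 * n - 3) {jordan n, matB n hn} :=
  wordSpan_mono h <|
    pow_mul_mul_pow_mem_wordSpan (jordan_mem_pair hn) (mem_wordSpan_one (matB_mem_pair hn)) a b

theorem single_mem_wordSpan_of_lt {i j : Fin n} (h : j < i) :
    single i j 1 ∈ wordSpan n (2 * n - 3) {jordan n, matB n hn} := by
  have hBJB := mul_mem_wordSpan (mul_mem_wordSpan (mem_wordSpan_one (matB_mem_pair hn))
    (pow_mem_wordSpan (jordan_mem_pair hn) (n - 3))) (mem_wordSpan_one (matB_mem_pair hn))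
  have hword := pow_mul_mul_pow_mem_wordSpan (jordan_mem_pair hn) hBJB (n - 1 - i) j
  rw [matB_mul_jordan_pow_mul_matB, mul_neg, neg_mul,
    jordan_pow_mul_single (i := i) (by dsimp only; omega),
    single_mul_jordan_pow (j := j) (by simp)] at hword
  simpa using wordSpan_mono (by omega) hword

theorem single_sub_single_mem_wordSpan (i j k : ℕ) (hi : k + i < n) (hj : k + j < n) :
    single ⟨i, by omega⟩ ⟨j, by omega⟩ 1 - single ⟨k + i, hi⟩ ⟨k + j, hj⟩ 1 ∈
      wordSpan n (2 * n - 3) {jordan n, matB n hn} := by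
  induction k with
  | zero => simp
  | succ k ih =>
    have hstep := jordan_pow_mul_matB_mul_jordan_pow_mem_wordSpan hn
      (a := n - 2 - (k + i)) (b := k + j) (by omega)
    rw [jordan_pow_mul_matB_mul_jordan_pow hn _ _ (by omega) (by omega)] at hstep
    have := add_mem (ih (by omega) (by omega)) hstep
    rw [sub_add_sub_cancel] at this
    convert this using 3 <;> simp only [Fin.mk.injEq] <;> omega

theorem single_zero_zero_mem_wordSpan :
    single ⟨0, by omega⟩ ⟨0, by omega⟩ 1 ∈ wordSpan n (2 * n - 3) {jordan n, matB n hn} := by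
  have hsum : ∑ k : Fin n, (single ⟨0, by omega⟩ ⟨0, by omega⟩ 1 - single k k 1) ∈
      wordSpan n (2 * n - 3) {jordan n, matB n hn} :=
    sum_mem fun k _ => single_sub_single_mem_wordSpan hn 0 0 k (by simp) (by simp)
  have hone : 1 ∈ wordSpan n (2 * n - 3) {jordan n, matB n hn} :=
    wordSpan_mono (Nat.zero_le _) one_mem_wordSpan
  have key : ∑ k : Fin n, (single ⟨0, by omega⟩ ⟨0, by omega⟩ 1 - single k k 1) + 1 =
      (n : ℂ) • single (⟨0, by omega⟩ : Fin n) ⟨0, by omega⟩ (1 : ℂ) := by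
    rw [Finset.sum_sub_distrib, sum_single_one, sub_add_cancel, Finset.sum_const,
      Finset.card_univ, Fintype.card_fin, Nat.cast_smul_eq_nsmul]
  have := add_mem hsum hone
  rwa [key, Submodule.smul_mem_iff _ (by exact_mod_cast (by omega : n ≠ 0))] at this

theorem single_zero_mem_wordSpan (d : ℕ) (hd : d < n) :
    single ⟨0, by omega⟩ ⟨d, hd⟩ 1 ∈ wordSpan n (2 * n - 3) {jordan n, matB n hn} := by
  rcases d with _ | d
  · exact single_zero_zero_mem_wordSpan hn
  rcases lt_or_eq_of_le (Nat.le_sub_one_of_lt hd) with hd' | hd'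
  · have hword := jordan_pow_mul_matB_mul_jordan_pow_mem_wordSpan hn
      (a := n - 1) (b := d) (by omega)
    rw [jordan_pow_sub_one_mul_matB_mul_jordan_pow hn d hd] at hword
    simpa using hword
  · rw [show (⟨d + 1, hd⟩ : Fin n) = ⟨n - 1, by omega⟩ from Fin.ext hd', ← jordan_pow_sub_one]
    exact wordSpan_mono (by omega) (pow_mem_wordSpan (jordan_mem_pair hn) _)

theorem single_mem_wordSpan_of_le {i j : Fin n} (h : i ≤ j) :
    single i j 1 ∈ wordSpan n (2 * n - 3) {jordan n, matB n hn} := by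
  obtain ⟨d, hd⟩ := Nat.exists_eq_add_of_le (Fin.le_def.1 h)
  have := sub_mem (single_zero_mem_wordSpan hn d (by omega))
    (single_sub_single_mem_wordSpan hn 0 d i (by simp) (by omega))
  rw [sub_sub_cancel] at this
  convert this using 2 <;> simp [Fin.ext_iff, hd]

theorem wordSpan_eq_top : wordSpan n (2 * n - 3) {jordan n, matB n hn} = ⊤ := by
  rw [eq_top_iff, ← (stdBasis ℂ (Fin n) (Fin n)).span_eq, Submodule.span_le]
  rintro _ ⟨⟨i, j⟩, rfl⟩
  rw [stdBasis_eq_single]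
  rcases lt_or_ge j i with h | h
  exacts [single_mem_wordSpan_of_lt hn h, single_mem_wordSpan_of_le hn h]

end spanning

section properness

variable {n : ℕ} (hn : 2 < n)

theorem trace_jordan_mul_list_prod (w : List (Matrix (Fin n) (Fin n) ℂ))
    (hlen : w.length ≤ 2 * n - 4) (hw : ∀ x ∈ w, x ∈ ({jordan n, matB n hn} : Set _)) :
    (jordan n * w.prod).trace = 0 := by
  obtain ⟨k, hdeg, -, h1⟩ :=
    exists_hasDiagDegree_list_prod hasDiagDegree_jordan (hasDiagDegree_matB hn) w hw
  by_cases hd : 1 + (w.length + (2 - n - 1) * k : ℤ) = 0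
  · obtain rfl : k = 1 := by
      rcases k with _ | _ | k
      · omega
      · rfl
      · have : (w.length : ℤ) ≤ 2 * n - 4 := by omega
        push_cast at hd
        nlinarith [mul_nonneg (by omega : (0 : ℤ) ≤ n - 1) k.cast_nonneg]
    obtain ⟨a, b, hab, hprod⟩ := h1 rfl
    rw [hprod, ← mul_assoc, ← mul_assoc, ← pow_succ', trace_mul_comm, ← mul_assoc, ← pow_add,
      show b + (a + 1) = n - 2 by omega, trace_jordan_pow_mul_matB]
  · exact (hasDiagDegree_jordan.mul hdeg).trace_eq_zero hd

theorem wordSpan_ne_top : wordSpan n (2 * n - 4) {jordan n, matB n hn} ≠ ⊤ := by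
  intro htop
  let φ := traceLinearMap (Fin n) ℂ ℂ ∘ₗ LinearMap.mulLeft ℂ (jordan n)
  have hker : wordSpan n (2 * n - 4) {jordan n, matB n hn} ≤ LinearMap.ker φ := by
    refine Submodule.span_le.2 ?_
    rintro _ ⟨w, hlen, hw, rfl⟩
    exact trace_jordan_mul_list_prod hn w hlen hw
  have h : single (⟨1, by omega⟩ : Fin n) ⟨0, by omega⟩ (1 : ℂ) ∈ LinearMap.ker φ :=
    hker (htop ▸ Submodule.mem_top)
  simp [φ, trace_mul_single, jordan] at h

end properness

/-- For `n ≥ 3` and `B_n = E_{n-1,1} - E_{n,2}`: the span of words in `{J_n, B_n}` of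
length at most `2n - 3` is all of `M_n(ℂ)`, while the span of words of length at most
`2n - 4` is a proper subspace; that is, `l({J_n, B_n}) = 2n - 3`. -/
theorem stmt_8 (n : ℕ) (hn : 3 ≤ n) :
    let B : Matrix (Fin n) (Fin n) ℂ :=
      Matrix.single ⟨n - 2, by omega⟩ ⟨0, by omega⟩ (1 : ℂ) -
        Matrix.single ⟨n - 1, by omega⟩ ⟨1, by omega⟩ (1 : ℂ)
    wordSpan n (2 * n - 3) {jordan n, B} = ⊤ ∧
      wordSpan n (2 * n - 4) {jordan n, B} ≠ ⊤ := by
  exact ⟨wordSpan_eq_top hn, wordSpan_ne_top hn⟩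
end

section
/- Let n and i be positive integers with i < n and gcd(i, n − i) = 1. If U is a ℂ-linear subspace of ℂ^n that is invariant under both J_n^i and (J_nᵀ)^{n−i} (i.e., J_n^i U ⊆ U and (J_nᵀ)^{n−i} U ⊆ U), then U = {0} or U = ℂ^n. -/
open Matrix

/-!
`J_n^i + (J_nᵀ)^(n-i)` is the cyclic shift of `ℂ^n` by `i`; since `gcd(i, n) = 1` its powers
give every cyclic shift, so `U` is stable under all of them. Undoing the shift, `J_n^i` becomes
the projection onto the coordinates `a < n - i`, so `U` is also stable under the projections onto
all cyclic translates of this interval. These translates separate coordinates, hence `U` is stable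
under each coordinate projection: a nonzero `U` contains a standard basis vector, and then, by
transitivity of the shifts, all of them.
-/

section IndicatorStable

variable {R ι : Type*} [Semiring R] {U : Submodule R (ι → R)}

theorem Submodule.single_mem_of_separating [Finite ι] [DecidableEq ι]
    (hsep : ∀ b c : ι, b ≠ c → ∃ T : Set ι, b ∈ T ∧ c ∉ T ∧ ∀ v ∈ U, T.indicator v ∈ U)
    {v : ι → R} (hv : v ∈ U) (b : ι) : Pi.single b (v b) ∈ U := by
  have : Fintype ι := Fintype.ofFinite ι
  have isolating : ∀ s : Finset ι, ∃ T : Set ι, b ∈ T ∧ (∀ c ∈ s, c ≠ b → c ∉ T) ∧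
      ∀ v ∈ U, T.indicator v ∈ U := by
    intro s
    induction s using Finset.induction_on with
    | empty => exact ⟨Set.univ, trivial, by simp, by simp⟩
    | insert c s _ ih =>
      obtain ⟨T, hbT, hsT, hTU⟩ := ih
      by_cases hcb : c = b
      · exact ⟨T, hbT, by simpa [hcb] using hsT, hTU⟩
      obtain ⟨T', hbT', hcT', hT'U⟩ := hsep b c (Ne.symm hcb)
      refine ⟨T' ∩ T, ⟨hbT', hbT⟩, ?_, fun v hv => ?_⟩
      · rintro d hd hdb ⟨hdT', hdT⟩
        rcases Finset.mem_insert.mp hd with rfl | hds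
        exacts [hcT' hdT', hsT d hds hdb hdT]
      · rw [← Set.indicator_indicator]
        exact hT'U _ (hTU v hv)
  obtain ⟨T, hbT, hT, hTU⟩ := isolating Finset.univ
  have hTb : T = {b} := by
    ext c
    by_cases hcb : c = b
    · simp [hcb, hbT]
    · simp [hcb, hT c (Finset.mem_univ c) hcb]
  simpa [hTb, Set.indicator_singleton] using hTU v hv

end IndicatorStable

theorem Submodule.eq_bot_or_eq_top_of_single_mem {K ι : Type*} [DivisionRing K] [Fintype ι]
    [DecidableEq ι] {U : Submodule K (ι → K)}
    (hsingle : ∀ v ∈ U, ∀ b, Pi.single b (v b) ∈ U)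
    (htrans : ∀ b c : ι, ∃ σ : ι ≃ ι, σ c = b ∧ ∀ v ∈ U, v ∘ σ ∈ U) :
    U = ⊥ ∨ U = ⊤ := by
  refine or_iff_not_imp_left.mpr fun hU => ?_
  obtain ⟨v, hv, hv0⟩ := (Submodule.ne_bot_iff U).mp hU
  obtain ⟨b, hb⟩ := Function.ne_iff.mp hv0
  have hsingle_all : ∀ c (x : K), Pi.single c x ∈ U := by
    intro c x
    obtain ⟨σ, hσ, hσU⟩ := htrans b c
    have hc : Pi.single c (v b) ∈ U := by
      simpa [Pi.single_comp_equiv, ← hσ] using hσU _ (hsingle v hv b)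
    have := U.smul_mem (x * (v b)⁻¹) hc
    rwa [← Pi.single_smul', smul_eq_mul, inv_mul_cancel_right₀ hb] at this
  refine Submodule.eq_top_iff'.mpr fun x => ?_
  rw [← Finset.univ_sum_single x]
  exact U.sum_mem fun c _ => hsingle_all c (x c)

section Translation

variable {R G : Type*} [Semiring R] {U : Submodule R (G → R)}

theorem Submodule.comp_add_nsmul_mem [AddMonoid G] {g : G}
    (hg : ∀ v ∈ U, (fun x => v (x + g)) ∈ U) (k : ℕ) :
    ∀ v ∈ U, (fun x => v (x + k • g)) ∈ U := by
  induction k with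
  | zero => simp
  | succ k ih =>
    intro v hv
    simpa only [succ_nsmul', add_assoc] using hg _ (ih v hv)

theorem Submodule.indicator_preimage_add_mem [AddGroup G]
    (hshift : ∀ g : G, ∀ v ∈ U, (fun x => v (x + g)) ∈ U)
    {T : Set G} (hT : ∀ v ∈ U, T.indicator v ∈ U) (g : G) :
    ∀ v ∈ U, ((· + g) ⁻¹' T).indicator v ∈ U := by
  intro v hv
  convert hshift g _ (hT _ (hshift (-g) v hv)) using 1
  funext x
  classical
  simp only [Set.indicator_apply, Set.mem_preimage, add_neg_cancel_right]

end Translation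

namespace Fin

variable {n : ℕ}

theorem val_nsmul [NeZero n] (k : ℕ) (a : Fin n) : ((k • a : Fin n) : ℕ) = k * a % n := by
  induction k with
  | zero => simp
  | succ k ih => rw [succ_nsmul, val_add, ih, Nat.mod_add_mod, add_one_mul]

theorem exists_nsmul_eq_of_coprime [NeZero n] {a : Fin n} (ha : Nat.Coprime a n) (g : Fin n) :
    ∃ k : ℕ, k • a = g := by
  obtain ⟨k, -, hk⟩ := Nat.exists_mul_mod_eq_of_coprime g ha (NeZero.ne n)
  exact ⟨k, Fin.ext (by rw [val_nsmul, mul_comm, hk, Nat.mod_eq_of_lt g.isLt])⟩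

theorem exists_val_add_lt_le_val_add {m : ℕ} (hm : 0 < m) (hmn : m < n) {b c : Fin n}
    (hbc : b ≠ c) : ∃ g : Fin n, ((b + g : Fin n) : ℕ) < m ∧ m ≤ ((c + g : Fin n) : ℕ) := by
  have : NeZero n := ⟨by omega⟩
  have hd : ((c - b : Fin n) : ℕ) ≠ 0 := Fin.val_ne_zero_iff.mpr (sub_ne_zero.mpr hbc.symm)
  have hdn := (c - b).isLt
  -- `b` goes to `m - d` and `c` to `max m d`, where `d = c - b`
  obtain ⟨r, hr⟩ : ∃ r : Fin n, (r : ℕ) = m - (c - b : Fin n) := ⟨⟨_, by omega⟩, rfl⟩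
  refine ⟨r - b, ?_, ?_⟩
  · rw [add_sub_cancel]
    omega
  · rw [show c + (r - b) = (c - b) + r by abel, val_add, Nat.mod_eq_of_lt (by omega)]
    omega

end Fin

section Jordan

variable {n : ℕ}

theorem jordan_mulVec (v : Fin n → ℂ) :
    jordan n *ᵥ v = fun a : Fin n => if h : (a : ℕ) + 1 < n then v ⟨a + 1, h⟩ else 0 := by
  funext a
  split_ifs with h
  · have hcond : ∀ b : Fin n, ((a : ℕ) + 1 = b ↔ (⟨a + 1, h⟩ : Fin n) = b) := fun b => by
      simp [Fin.ext_iff]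
    simp [mulVec, dotProduct, jordan, hcond]
  · simp only [mulVec, dotProduct, jordan, of_apply, ite_mul, one_mul, zero_mul]
    exact Finset.sum_eq_zero fun b _ => if_neg (by omega)

theorem jordan_transpose_mulVec (v : Fin n → ℂ) :
    (jordan n)ᵀ *ᵥ v = fun a : Fin n => if h : 1 ≤ (a : ℕ) then v ⟨a - 1, by omega⟩ else 0 := by
  funext a
  split_ifs with h
  · have hcond : ∀ b : Fin n, ((b : ℕ) + 1 = a ↔ (⟨a - 1, by omega⟩ : Fin n) = b) := fun b => by
      simp [Fin.ext_iff]; omega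
    simp [mulVec, dotProduct, jordan, hcond]
  · simp only [mulVec, dotProduct, jordan, transpose_apply, of_apply, ite_mul, one_mul, zero_mul]
    exact Finset.sum_eq_zero fun b _ => if_neg (by omega)

theorem jordan_pow_mulVec (k : ℕ) (v : Fin n → ℂ) :
    (jordan n ^ k) *ᵥ v = fun a : Fin n => if h : (a : ℕ) + k < n then v ⟨a + k, h⟩ else 0 := by
  induction k generalizing v with
  | zero => simp
  | succ k ih =>
    funext a
    rw [pow_succ', ← mulVec_mulVec, jordan_mulVec, ih]
    by_cases h : (a : ℕ) + (k + 1) < n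
    · simp only [dif_pos h, dif_pos (show (a : ℕ) + 1 < n by omega), Nat.add_right_comm _ 1 k,
        add_assoc]
    · by_cases h1 : (a : ℕ) + 1 < n
      · simp only [dif_neg h, dif_pos h1, dif_neg (show ¬(a : ℕ) + 1 + k < n by omega)]
      · simp only [dif_neg h, dif_neg h1]

theorem jordan_transpose_pow_mulVec (k : ℕ) (v : Fin n → ℂ) :
    ((jordan n)ᵀ ^ k) *ᵥ v =
      fun a : Fin n => if h : k ≤ (a : ℕ) then v ⟨a - k, by omega⟩ else 0 := by
  induction k generalizing v with
  | zero => simp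
  | succ k ih =>
    funext a
    rw [pow_succ', ← mulVec_mulVec, jordan_transpose_mulVec, ih]
    by_cases h : k + 1 ≤ (a : ℕ)
    · simp only [dif_pos h, dif_pos (show 1 ≤ (a : ℕ) by omega),
        dif_pos (show k ≤ (a : ℕ) - 1 by omega), Nat.sub_sub, Nat.add_comm 1 k]
    · by_cases h1 : 1 ≤ (a : ℕ)
      · simp only [dif_neg h, dif_pos h1, dif_neg (show ¬k ≤ (a : ℕ) - 1 by omega)]
      · simp only [dif_neg h, dif_neg h1]

variable {i : ℕ}

theorem jordan_pow_mulVec_eq_indicator (hin : i < n) (v : Fin n → ℂ) :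
    (jordan n ^ i) *ᵥ v = {a : Fin n | (a : ℕ) + i < n}.indicator fun a => v (a + ⟨i, hin⟩) := by
  classical
  funext a
  simp only [jordan_pow_mulVec, Set.indicator_apply, Set.mem_ofPred_eq]
  split_ifs
  · exact congrArg v (Fin.ext (by simp only [Fin.val_add_eq_ite]; split_ifs <;> omega))
  · rfl

theorem jordan_pow_mulVec_add_transpose_pow_mulVec (hin : i < n) (v : Fin n → ℂ) :
    (jordan n ^ i) *ᵥ v + ((jordan n)ᵀ ^ (n - i)) *ᵥ v = fun a => v (a + ⟨i, hin⟩) := by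
  funext a
  rw [Pi.add_apply, jordan_pow_mulVec, jordan_transpose_pow_mulVec]
  by_cases h : (a : ℕ) + i < n
  · simp only [dif_pos h, dif_neg (show ¬n - i ≤ (a : ℕ) by omega), add_zero]
    exact congrArg v (Fin.ext (by simp only [Fin.val_add_eq_ite]; split_ifs <;> omega))
  · simp only [dif_neg h, dif_pos (show n - i ≤ (a : ℕ) by omega), zero_add]
    exact congrArg v (Fin.ext (by simp only [Fin.val_add_eq_ite]; split_ifs <;> omega))

end Jordan

/-- For `0 < i < n` with `gcd(i, n-i) = 1`, any subspace of `ℂⁿ` invariant under both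
`J_n^i` and `(J_nᵀ)^{n-i}` is trivial. -/
theorem stmt_14 (n i : ℕ) (hi : 0 < i) (hin : i < n) (hgcd : Nat.gcd i (n - i) = 1)
    (U : Submodule ℂ (Fin n → ℂ))
    (hU1 : ∀ v ∈ U, (jordan n ^ i).mulVec v ∈ U)
    (hU2 : ∀ v ∈ U, ((jordan n)ᵀ ^ (n - i)).mulVec v ∈ U) :
    U = ⊥ ∨ U = ⊤ := by
  have : NeZero n := ⟨by omega⟩
  have hco : Nat.Coprime i n := (Nat.coprime_sub_self_right hin.le).mp hgcd
  have hshift : ∀ g : Fin n, ∀ v ∈ U, (fun a => v (a + g)) ∈ U := by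
    intro g
    obtain ⟨k, rfl⟩ := Fin.exists_nsmul_eq_of_coprime (a := ⟨i, hin⟩) hco g
    refine U.comp_add_nsmul_mem (fun v hv => ?_) k
    rw [← jordan_pow_mulVec_add_transpose_pow_mulVec hin]
    exact U.add_mem (hU1 v hv) (hU2 v hv)
  have hmask : ∀ v ∈ U, {a : Fin n | (a : ℕ) + i < n}.indicator v ∈ U := by
    intro v hv
    simpa [jordan_pow_mulVec_eq_indicator hin] using hU1 _ (hshift (-⟨i, hin⟩) v hv)
  refine U.eq_bot_or_eq_top_of_single_mem (fun v hv b => U.single_mem_of_separating ?_ hv b)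
    fun b c => ⟨Equiv.addRight (b - c), by simp, fun v hv => hshift _ v hv⟩
  intro b c hbc
  obtain ⟨g, hb, hc⟩ := Fin.exists_val_add_lt_le_val_add (m := n - i) (by omega) (by omega) hbc
  exact ⟨(· + g) ⁻¹' {a | (a : ℕ) + i < n},
    by simp only [Set.preimage_ofPred_eq, Set.mem_ofPred_eq]; omega,
    by simp only [Set.preimage_ofPred_eq, Set.mem_ofPred_eq]; omega,
    U.indicator_preimage_add_mem hshift hmask g⟩
end
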